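/- Consequently, for any connected graph G, the vc-treewidth of G is at most its treewidth plus one: κ_vc-tree(G) ≤ κ_tree(G) + 1. -/

import Mathlib

open SimpleGraph

/-- The vertex set (in `VT`) of the component of `T - z` containing `x`. -/
def compSet {VT : Type*} (T : SimpleGraph VT) (z : VT) (x : {w : VT // w ≠ z}) : Set VT :=
  Subtype.val '' {y | (SimpleGraph.comap (Subtype.val : {w : VT // w ≠ z} → VT) T).Reachable x y}

/-- The part `V_x = β(V(T^{(z)}_x)) \ β(z)` of the star partition at `z`. -/
def starPart {VG VT : Type*} (β : VT → Set VG) (T : SimpleGraph VT) (z : VT)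
    (x : {w : VT // w ≠ z}) : Set VG :=
  (⋃ w ∈ compSet T z x, β w) \ β z

/-- `(T, β)` is a vertex-cut tree of `G`: `T` is a tree, (VC1) `β` covers `V(G)`,
(VC2) the intersection condition along paths of `T`, and (VC3) at each `z` the sets
`(β z, V_1, ..., V_δ)` form a star partition of `V(G)`. -/
def IsVCTree {VG VT : Type*} (G : SimpleGraph VG) (T : SimpleGraph VT)
    (β : VT → Set VG) : Prop :=
  T.IsTree ∧
  (⋃ z, β z) = Set.univ ∧
  (∀ (x y z : VT) (p : T.Walk x y), z ∈ p.support → β x ∩ β y ⊆ β z) ∧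
  (∀ (z : VT) (x y : {w : VT // w ≠ z}),
    ¬ (SimpleGraph.comap (Subtype.val : {w : VT // w ≠ z} → VT) T).Reachable x y →
    Disjoint (starPart β T z x) (starPart β T z y)) ∧
  (∀ z : VT, (β z ∪ ⋃ x : {w : VT // w ≠ z}, starPart β T z x) = Set.univ) ∧
  (∀ (z : VT) (x : {w : VT // w ≠ z}) (u v : VG), G.Adj u v →
    u ∈ starPart β T z x → v ∈ β z ∨ v ∈ starPart β T z x)

/-- The vc-width `max_z |β(z)|`. -/
noncomputable def vcWidth {VG VT : Type*} [Fintype VT] (β : VT → Set VG) : ℕ :=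
  Finset.univ.sup fun z => (β z).ncard

/-- The vc-treewidth of `G`: least vc-width over all vertex-cut trees of `G`. -/
noncomputable def vcTreewidth {VG : Type*} (G : SimpleGraph VG) : ℕ :=
  sInf {w | ∃ (m : ℕ) (T : SimpleGraph (Fin m)) (β : Fin m → Set VG),
    IsVCTree G T β ∧ w = vcWidth β}

/-- `(T, β)` is a tree decomposition of `G`. -/
def IsTreeDecomp {VG VT : Type*} (G : SimpleGraph VG) (T : SimpleGraph VT)
    (β : VT → Set VG) : Prop :=
  T.IsTree ∧
  (⋃ z, β z) = Set.univ ∧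
  (∀ (x y z : VT) (p : T.Walk x y), z ∈ p.support → β x ∩ β y ⊆ β z) ∧
  (∀ u v : VG, G.Adj u v → ∃ z : VT, u ∈ β z ∧ v ∈ β z)

/-- The treewidth of `G`: least width `max_z |β(z)| − 1` over all tree decompositions. -/
noncomputable def treewidthG {VG : Type*} (G : SimpleGraph VG) : ℕ :=
  sInf {w | ∃ (m : ℕ) (T : SimpleGraph (Fin m)) (β : Fin m → Set VG),
    IsTreeDecomp G T β ∧ w = vcWidth β - 1}

/-! A tree decomposition is already a vertex-cut tree. By (VC2), the bags containing a vertex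
`u ∉ β z` all lie in one component of `T - z`; hence the parts `V_i` at `z` are disjoint, and
an edge leaving `V_i` must end in `β z`, since some bag containing both ends lies in the same
component. Its vc-width `max |β z|` is its width plus one. -/

lemma reachable_comap_val_of_notMem_support {VT : Type*} {T : SimpleGraph VT} {z a b : VT}
    (p : T.Walk a b) (hp : z ∉ p.support) (ha : a ≠ z) (hb : b ≠ z) :
    (T.comap (Subtype.val : {w : VT // w ≠ z} → VT)).Reachable ⟨a, ha⟩ ⟨b, hb⟩ :=
  (p.induce {w | w ≠ z} fun _ hw hwz => hp (hwz ▸ hw)).reachable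

lemma mem_starPart_iff {VG VT : Type*} {β : VT → Set VG} {T : SimpleGraph VT} {z : VT}
    {x : {w : VT // w ≠ z}} {u : VG} :
    u ∈ starPart β T z x ↔ (∃ w : {w : VT // w ≠ z},
      (T.comap (Subtype.val : {w : VT // w ≠ z} → VT)).Reachable x w ∧ u ∈ β w) ∧ u ∉ β z := by
  simp [starPart, compSet]

lemma reachable_of_mem_bags {VG VT : Type*} {T : SimpleGraph VT} {β : VT → Set VG}
    (hT : T.Connected) (hpath : ∀ (x y z : VT) (p : T.Walk x y), z ∈ p.support → β x ∩ β y ⊆ β z)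
    {z : VT} {u : VG} (hu : u ∉ β z) {w w' : {w : VT // w ≠ z}} (huw : u ∈ β w)
    (huw' : u ∈ β w') : (T.comap (Subtype.val : {w : VT // w ≠ z} → VT)).Reachable w w' := by
  obtain ⟨p⟩ := hT w.1 w'.1
  exact reachable_comap_val_of_notMem_support p
    (fun hz => hu (hpath _ _ z p hz ⟨huw, huw'⟩)) w.2 w'.2

lemma IsTreeDecomp.isVCTree {VG VT : Type*} {G : SimpleGraph VG} {T : SimpleGraph VT}
    {β : VT → Set VG} (h : IsTreeDecomp G T β) : IsVCTree G T β := by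
  obtain ⟨htree, hcov, hpath, hedge⟩ := h
  have hreach := @reachable_of_mem_bags _ _ _ _ htree.connected hpath
  refine ⟨htree, hcov, hpath, ?disjoint, ?cover, ?edges⟩
  case disjoint =>
    intro z x y hxy
    refine Set.disjoint_left.2 fun u hux huy => ?_
    obtain ⟨⟨w, hxw, huw⟩, hu⟩ := mem_starPart_iff.1 hux
    obtain ⟨⟨w', hyw', huw'⟩, -⟩ := mem_starPart_iff.1 huy
    exact hxy (hxw.trans ((hreach hu huw huw').trans hyw'.symm))
  case cover =>
    refine fun z => Set.eq_univ_of_forall fun u => ?_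
    by_cases hu : u ∈ β z
    · exact Or.inl hu
    obtain ⟨w, huw⟩ := Set.mem_iUnion.1 (hcov ▸ Set.mem_univ u)
    have hwz : w ≠ z := by rintro rfl; exact hu huw
    exact Or.inr (Set.mem_iUnion.2 ⟨⟨w, hwz⟩, mem_starPart_iff.2 ⟨⟨_, .rfl, huw⟩, hu⟩⟩)
  case edges =>
    intro z x u v huv hux
    by_cases hv : v ∈ β z
    · exact Or.inl hv
    obtain ⟨⟨w, hxw, huw⟩, hu⟩ := mem_starPart_iff.1 hux
    obtain ⟨b, hub, hvb⟩ := hedge u v huv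
    have hbz : b ≠ z := by rintro rfl; exact hu hub
    exact Or.inr (mem_starPart_iff.2
      ⟨⟨⟨b, hbz⟩, hxw.trans (hreach (w' := ⟨b, hbz⟩) hu huw hub), hvb⟩, hv⟩)

lemma isTreeDecomp_univ {VG : Type*} (G : SimpleGraph VG) :
    IsTreeDecomp G (⊥ : SimpleGraph (Fin 1)) fun _ => Set.univ :=
  ⟨.of_subsingleton, Set.iUnion_const _, fun _ _ _ _ _ => Set.subset_univ _,
    fun _ _ _ => ⟨0, trivial, trivial⟩⟩

theorem vcTreewidth_le_treewidth_add_one_general {VG : Type*}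
    (G : SimpleGraph VG) :
    vcTreewidth G ≤ treewidthG G + 1 := by
  obtain ⟨m, T, β, htd, htw⟩ : treewidthG G ∈ {w | ∃ (m : ℕ) (T : SimpleGraph (Fin m))
      (β : Fin m → Set VG), IsTreeDecomp G T β ∧ w = vcWidth β - 1} :=
    Nat.sInf_mem ⟨_, 1, ⊥, _, isTreeDecomp_univ G, rfl⟩
  have hvc : vcTreewidth G ≤ vcWidth β := Nat.sInf_le ⟨m, T, β, htd.isVCTree, rfl⟩
  omega

/-- for any connected graph `G`, `κ_vc-tree(G) ≤ κ_tree(G) + 1`. -/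
theorem vcTreewidth_le_treewidth_add_one {VG : Type*} [Fintype VG]
    (G : SimpleGraph VG) (hG : G.Connected) :
    vcTreewidth G ≤ treewidthG G + 1 :=
  vcTreewidth_le_treewidth_add_one_general G
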